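/- Sharp constant in the C_p lower bound (Lemma 2.7, Huang–Tong): Let p ≥ 2. The sharp constant c₁(p) := inf_{(s,t)∈ℝ²\{(0,0)}} [ (t²+s²+2s+1)^{p/2} − 1 − ps ] / (t²+s²)^{p/2} equals (p−1)(1−k₀)^p + p·k₀(1−k₀)^{p−1} + k₀^p > 0, where k₀ = r₀/(1+r₀) and r₀ is the unique solution in [1,∞) of r^{p−1} − (p−1)r − (p−2) = 0 (r₀ = 1 when p = 2). -/

import Mathlib

/-!
Write `ρ = √(s² + t²)`, so the numerator is `(ρ² + 2s + 1)^{p/2} - 1 - ps`. For `ρ ≥ 2` it is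
increasing in `s ∈ [-ρ, ρ]`, because `x ↦ x^{p/2} - (p/2)x` is increasing on `[1, ∞)`; hence on
that circle the quotient is smallest at `(s, t) = (-ρ, 0)`, where it equals `φ((ρ-1)/ρ)` with
`φ(k) = k^p + p(1-k)^{p-1} - (1-k)^p`. On `[1/2, 1)` the function `φ` is convex and
`φ'(r/(1+r))` is a positive multiple of `r^{p-1} - (p-1)r - (p-2)`, so `φ` is minimal there at
`k₀`. For `ρ ≤ 2`, Bernoulli's inequality bounds the numerator below by `(p/2)ρ² ≥ φ(1/2) ρ^p`.
-/

/-- The sharp constant `c₁(p)`: the infimum over `(s,t) ≠ (0,0)` of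
`[(t²+s²+2s+1)^{p/2} - 1 - ps] / (t²+s²)^{p/2}`. -/
noncomputable def c1 (p : ℝ) : ℝ :=
  sInf { r : ℝ | ∃ s t : ℝ, ¬(s = 0 ∧ t = 0) ∧
    r = ((t ^ 2 + s ^ 2 + 2 * s + 1) ^ (p / 2) - 1 - p * s) / (t ^ 2 + s ^ 2) ^ (p / 2) }

open Real Set

theorem ConvexOn.isMinOn_of_hasDerivAt_eq_zero {S : Set ℝ} {f : ℝ → ℝ} {x : ℝ}
    (hf : ConvexOn ℝ S f) (hx : x ∈ S) (hf' : HasDerivAt f 0 x) : IsMinOn f S x := by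
  intro y hy
  rcases lt_trichotomy x y with hxy | hxy | hyx
  · have := hf.le_slope_of_hasDerivAt hx hy hxy hf'
    rw [slope_def_field, le_div_iff₀ (sub_pos.2 hxy)] at this
    simpa using this
  · exact hxy ▸ le_refl (f x)
  · have := hf.slope_le_of_hasDerivAt hy hx hyx hf'
    rw [slope_def_field, div_le_iff₀ (sub_pos.2 hyx)] at this
    simpa using this

noncomputable def phi (p k : ℝ) : ℝ := k ^ p + p * (1 - k) ^ (p - 1) - (1 - k) ^ p

noncomputable def phiDeriv (p k : ℝ) : ℝ :=
  p * k ^ (p - 1) + p * (1 - k) ^ (p - 1) - p * (p - 1) * (1 - k) ^ (p - 2)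

section Derivatives

variable {p x : ℝ}

theorem hasDerivAt_one_sub_rpow (q : ℝ) (hx : x < 1) :
    HasDerivAt (fun k : ℝ => (1 - k) ^ q) (-(q * (1 - x) ^ (q - 1))) x := by
  have h1 : HasDerivAt (fun k : ℝ => 1 - k) (-1) x := by
    simpa using (hasDerivAt_id x).const_sub 1
  exact ((Real.hasDerivAt_rpow_const (Or.inl (sub_ne_zero.2 hx.ne'))).comp x h1).congr_deriv
    (by ring)

theorem hasDerivAt_phi (hx0 : 0 < x) (hx1 : x < 1) : HasDerivAt (phi p) (phiDeriv p x) x := by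
  have h := ((Real.hasDerivAt_rpow_const (p := p) (Or.inl hx0.ne')).add
    ((hasDerivAt_one_sub_rpow (p - 1) hx1).const_mul p)).sub (hasDerivAt_one_sub_rpow p hx1)
  refine h.congr_deriv ?_
  rw [phiDeriv, show p - 1 - 1 = p - 2 by ring]
  ring

theorem hasDerivAt_phiDeriv (hx0 : 0 < x) (hx1 : x < 1) :
    HasDerivAt (phiDeriv p) (p * (p - 1) *
      (x ^ (p - 2) - (1 - x) ^ (p - 2) + (p - 2) * (1 - x) ^ (p - 3))) x := by
  have h := (((Real.hasDerivAt_rpow_const (p := p - 1) (Or.inl hx0.ne')).const_mul p).add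
    ((hasDerivAt_one_sub_rpow (p - 1) hx1).const_mul p)).sub
    ((hasDerivAt_one_sub_rpow (p - 2) hx1).const_mul (p * (p - 1)))
  refine h.congr_deriv ?_
  rw [show p - 1 - 1 = p - 2 by ring, show p - 2 - 1 = p - 3 by ring]
  ring

end Derivatives

theorem convexOn_phi {p : ℝ} (hp : 2 ≤ p) : ConvexOn ℝ (Ico (1 / 2) 1) (phi p) := by
  have hmem : ∀ x ∈ Ico (1 / 2 : ℝ) 1, 0 < x ∧ x < 1 := fun x hx => ⟨by linarith [hx.1], hx.2⟩
  refine convexOn_of_hasDerivWithinAt2_nonneg (convex_Ico _ _)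
    (fun x hx => (hasDerivAt_phi (hmem x hx).1 (hmem x hx).2).continuousAt.continuousWithinAt)
    (f' := phiDeriv p)
    (f'' := fun x => p * (p - 1) * (x ^ (p - 2) - (1 - x) ^ (p - 2) + (p - 2) * (1 - x) ^ (p - 3)))
    ?_ ?_ ?_
  all_goals rw [interior_Ico]
  · exact fun x hx => (hasDerivAt_phi (by linarith [hx.1]) hx.2).hasDerivWithinAt
  · exact fun x hx => (hasDerivAt_phiDeriv (by linarith [hx.1]) hx.2).hasDerivWithinAt
  · rintro x ⟨hx0, hx1⟩
    have hsymm : (1 - x) ^ (p - 2) ≤ x ^ (p - 2) :=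
      rpow_le_rpow (by linarith) (by linarith) (by linarith)
    have hlast : 0 ≤ (p - 2) * (1 - x) ^ (p - 3) :=
      mul_nonneg (by linarith) (rpow_nonneg (by linarith) _)
    exact mul_nonneg (by nlinarith) (by linarith)

theorem phiDeriv_div_one_add (p : ℝ) {r : ℝ} (hr : 0 ≤ r) :
    phiDeriv p (r / (1 + r)) = p * (r ^ (p - 1) - (p - 1) * r - (p - 2)) / (1 + r) ^ (p - 1) := by
  have hb : 0 < 1 + r := by linarith
  have h1 : 1 - r / (1 + r) = (1 + r)⁻¹ := by field_simp; ring
  have hpow : (1 + r) ^ (p - 1) = (1 + r) ^ (p - 2) * (1 + r) := by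
    rw [← rpow_add_one hb.ne', show p - 2 + 1 = p - 1 by ring]
  rw [phiDeriv, h1, div_rpow hr hb.le, inv_rpow hb.le, inv_rpow hb.le, hpow]
  have := rpow_pos_of_pos hb (p - 2)
  field_simp
  ring

theorem isMinOn_phi {p r₀ : ℝ} (hp : 2 ≤ p) (hr₀ : 1 ≤ r₀)
    (hroot : r₀ ^ (p - 1) - (p - 1) * r₀ - (p - 2) = 0) :
    IsMinOn (phi p) (Ico (1 / 2) 1) (r₀ / (1 + r₀)) := by
  have hb : 0 < 1 + r₀ := by linarith
  have hk₀ : r₀ / (1 + r₀) ∈ Ico (1 / 2 : ℝ) 1 :=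
    ⟨by rw [le_div_iff₀ hb]; linarith, by rw [div_lt_one hb]; linarith⟩
  refine (convexOn_phi hp).isMinOn_of_hasDerivAt_eq_zero hk₀ ?_
  have hderiv := hasDerivAt_phi (p := p) (by positivity) hk₀.2
  rwa [phiDeriv_div_one_add p (by linarith), hroot, mul_zero, zero_div] at hderiv

theorem phi_pos {p k : ℝ} (hp : 1 ≤ p) (hk0 : 0 < k) (hk1 : k < 1) : 0 < phi p k := by
  have hpow : (1 - k) ^ p = (1 - k) ^ (p - 1) * (1 - k) := by
    rw [← rpow_add_one (by linarith), sub_add_cancel]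
  have := rpow_pos_of_pos hk0 p
  have := rpow_pos_of_pos (sub_pos.2 hk1) (p - 1)
  rw [phi, hpow]
  nlinarith

theorem phi_eq_of_lt_one {p k : ℝ} (hk : k < 1) :
    phi p k = (p - 1) * (1 - k) ^ p + p * k * (1 - k) ^ (p - 1) + k ^ p := by
  have hpow : (1 - k) ^ p = (1 - k) ^ (p - 1) * (1 - k) := by
    rw [← rpow_add_one (by linarith), sub_add_cancel]
  rw [phi, hpow]
  ring

theorem phi_sub_one_div (p : ℝ) {ρ : ℝ} (hρ : 1 ≤ ρ) :
    phi p ((ρ - 1) / ρ) = ((ρ - 1) ^ p + p * ρ - 1) / ρ ^ p := by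
  have hρ0 : 0 < ρ := by linarith
  have h1 : 1 - (ρ - 1) / ρ = ρ⁻¹ := by field_simp; ring
  have hpow : ρ ^ p = ρ ^ (p - 1) * ρ := by rw [← rpow_add_one hρ0.ne', sub_add_cancel]
  rw [phi, h1, div_rpow (by linarith) hρ0.le, inv_rpow hρ0.le, inv_rpow hρ0.le, hpow]
  have := rpow_pos_of_pos hρ0 (p - 1)
  field_simp

theorem sq_rpow_div_two {x : ℝ} (hx : 0 ≤ x) (p : ℝ) : (x ^ 2) ^ (p / 2) = x ^ p := by
  rw [← rpow_natCast_mul hx, Nat.cast_ofNat, mul_div_cancel₀ _ two_ne_zero]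

noncomputable def c1Numerator (p s t : ℝ) : ℝ := (t ^ 2 + s ^ 2 + 2 * s + 1) ^ (p / 2) - 1 - p * s

noncomputable def c1Ratio (p s t : ℝ) : ℝ := c1Numerator p s t / (t ^ 2 + s ^ 2) ^ (p / 2)

theorem c1Ratio_neg_zero (p : ℝ) {ρ : ℝ} (hρ : 1 ≤ ρ) :
    c1Ratio p (-ρ) 0 = phi p ((ρ - 1) / ρ) := by
  rw [c1Ratio, c1Numerator, phi_sub_one_div p hρ,
    show (0 : ℝ) ^ 2 + (-ρ) ^ 2 + 2 * -ρ + 1 = (ρ - 1) ^ 2 by ring,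
    show (0 : ℝ) ^ 2 + (-ρ) ^ 2 = ρ ^ 2 by ring, sq_rpow_div_two (by linarith),
    sq_rpow_div_two (by linarith)]
  ring

theorem mul_sq_le_c1Numerator {p : ℝ} (hp : 2 ≤ p) (s t : ℝ) :
    p / 2 * (s ^ 2 + t ^ 2) ≤ c1Numerator p s t := by
  have hbern := one_add_mul_self_le_rpow_one_add (s := s ^ 2 + t ^ 2 + 2 * s)
    (by nlinarith [sq_nonneg (s + 1), sq_nonneg t]) (p := p / 2) (by linarith)
  rw [show 1 + (s ^ 2 + t ^ 2 + 2 * s) = t ^ 2 + s ^ 2 + 2 * s + 1 by ring] at hbern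
  rw [c1Numerator]
  linarith

theorem phi_half_mul_rpow_le {p ρ : ℝ} (hp : 2 ≤ p) (hρ0 : 0 ≤ ρ) (hρ2 : ρ ≤ 2) :
    phi p (1 / 2) * ρ ^ p ≤ p / 2 * ρ ^ 2 := by
  have hsplit : phi p (1 / 2) * ρ ^ p = p / 2 * ρ ^ 2 * (ρ / 2) ^ (p - 2) := by
    have hhalf : (1 / 2 : ℝ) ^ (p - 1) = (1 / 2) ^ (p - 2) * (1 / 2) := by
      rw [← rpow_add_one (by norm_num), show p - 2 + 1 = p - 1 by ring]
    have hρp : ρ ^ p = ρ ^ (p - 2) * ρ ^ 2 := by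
      rw [← rpow_natCast, ← rpow_add' hρ0 (by norm_num; linarith)]
      norm_num
    rw [phi, show (1 : ℝ) - 1 / 2 = 1 / 2 by norm_num, hhalf, hρp, div_eq_mul_one_div ρ,
      mul_rpow hρ0 (by norm_num)]
    ring
  rw [hsplit]
  have : (ρ / 2) ^ (p - 2) ≤ 1 := rpow_le_one (by positivity) (by linarith) (by linarith)
  have : 0 ≤ p / 2 * ρ ^ 2 := by positivity
  nlinarith

theorem rpow_add_mul_sub_le_rpow {q A B : ℝ} (hq : 1 ≤ q) (hA : 1 ≤ A) (hAB : A ≤ B) :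
    A ^ q + q * (B - A) ≤ B ^ q := by
  rcases hAB.eq_or_lt with rfl | hAB
  · simp
  have hslope := (convexOn_rpow hq).le_slope_of_hasDerivAt (by simp; linarith) (by simp; linarith)
    hAB (Real.hasDerivAt_rpow_const (Or.inr hq))
  rw [slope_def_field, le_div_iff₀ (sub_pos.2 hAB)] at hslope
  have : q * (B - A) ≤ q * A ^ (q - 1) * (B - A) := by
    have := one_le_rpow hA (by linarith : 0 ≤ q - 1)
    nlinarith [mul_nonneg (by linarith : 0 ≤ q) (sub_nonneg.2 hAB.le)]
  linarith

theorem sub_one_rpow_add_le_c1Numerator {p ρ s t : ℝ} (hp : 2 ≤ p) (hρ : 2 ≤ ρ)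
    (hst : s ^ 2 + t ^ 2 = ρ ^ 2) :
    (ρ - 1) ^ p + p * ρ - 1 ≤ c1Numerator p s t := by
  have hs : -ρ ≤ s := by nlinarith [sq_nonneg t]
  have h := rpow_add_mul_sub_le_rpow (q := p / 2) (A := (ρ - 1) ^ 2)
    (B := t ^ 2 + s ^ 2 + 2 * s + 1) (by linarith) (by nlinarith) (by nlinarith)
  rw [sq_rpow_div_two (by linarith)] at h
  rw [c1Numerator]
  nlinarith

theorem le_c1Ratio {p C s t : ℝ} (hp : 2 ≤ p) (hC : ∀ k ∈ Ico (1 / 2 : ℝ) 1, C ≤ phi p k)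
    (hst : ¬(s = 0 ∧ t = 0)) : C ≤ c1Ratio p s t := by
  have hpos : 0 < s ^ 2 + t ^ 2 := by
    by_contra h
    exact hst ⟨by nlinarith [sq_nonneg s, sq_nonneg t], by nlinarith [sq_nonneg s, sq_nonneg t]⟩
  set ρ := √(s ^ 2 + t ^ 2)
  have hρ : 0 < ρ := sqrt_pos.2 hpos
  have hρsq : s ^ 2 + t ^ 2 = ρ ^ 2 := (sq_sqrt hpos.le).symm
  have hρp : 0 < ρ ^ p := rpow_pos_of_pos hρ p
  have hden : (t ^ 2 + s ^ 2) ^ (p / 2) = ρ ^ p := by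
    rw [add_comm, hρsq, sq_rpow_div_two hρ.le]
  rw [c1Ratio, hden, le_div_iff₀ hρp]
  rcases le_or_gt ρ 2 with hρ2 | hρ2
  · calc C * ρ ^ p ≤ phi p (1 / 2) * ρ ^ p :=
          mul_le_mul_of_nonneg_right (hC _ ⟨le_rfl, by norm_num⟩) hρp.le
      _ ≤ p / 2 * ρ ^ 2 := phi_half_mul_rpow_le hp hρ.le hρ2
      _ ≤ _ := hρsq ▸ mul_sq_le_c1Numerator hp s t
  · have hk : (ρ - 1) / ρ ∈ Ico (1 / 2 : ℝ) 1 :=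
      ⟨by rw [le_div_iff₀ hρ]; linarith, by rw [div_lt_one hρ]; linarith⟩
    calc C * ρ ^ p ≤ phi p ((ρ - 1) / ρ) * ρ ^ p := mul_le_mul_of_nonneg_right (hC _ hk) hρp.le
      _ = (ρ - 1) ^ p + p * ρ - 1 := by
          rw [phi_sub_one_div p (by linarith), div_mul_cancel₀ _ hρp.ne']
      _ ≤ _ := sub_one_rpow_add_le_c1Numerator hp hρ2.le hρsq

/-- Sharp constant in the `C_p` lower bound (Huang–Tong): for `p ≥ 2`, if `r₀` is the (unique)
solution in `[1,∞)` of `r^{p-1} - (p-1)r - (p-2) = 0` and `k₀ = r₀/(1+r₀)`, then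
`c₁(p) = (p-1)(1-k₀)^p + p k₀ (1-k₀)^{p-1} + k₀^p > 0`. -/
theorem c1_sharp_formula (p : ℝ) (hp : 2 ≤ p) (r₀ : ℝ) (hr₀ : r₀ ∈ Set.Ici (1 : ℝ))
    (hroot : r₀ ^ (p - 1) - (p - 1) * r₀ - (p - 2) = 0)
    (k₀ : ℝ) (hk₀ : k₀ = r₀ / (1 + r₀)) :
    c1 p = (p - 1) * (1 - k₀) ^ p + p * k₀ * (1 - k₀) ^ (p - 1) + k₀ ^ p
      ∧ 0 < (p - 1) * (1 - k₀) ^ p + p * k₀ * (1 - k₀) ^ (p - 1) + k₀ ^ p := by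
  have hr₀ : 1 ≤ r₀ := hr₀
  have hk₀1 : k₀ < 1 := by rw [hk₀, div_lt_one (by linarith)]; linarith
  rw [← phi_eq_of_lt_one hk₀1]
  refine ⟨IsLeast.csInf_eq ⟨⟨-(1 + r₀), 0, fun h => by linarith [h.1], ?_⟩, ?_⟩,
    phi_pos (by linarith) (by rw [hk₀]; positivity) hk₀1⟩
  · have hattained := c1Ratio_neg_zero p (ρ := 1 + r₀) (by linarith)
    rw [add_sub_cancel_left, ← hk₀] at hattained
    exact hattained.symm
  · rintro _ ⟨s, t, hst, rfl⟩
    exact le_c1Ratio hp (fun k hk => hk₀ ▸ isMinOn_phi hp hr₀ hroot hk) hst
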